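/- Let 𝕂 be ℝ or ℂ, let λ ∈ 𝕂 with 0 < |λ| < 1, and let A_1 = [[1,0],[0,0]], A_2 = [[0,0],[0,1]], A_3 = [[0,λ],[λ,0]]. Then the triple 𝒜 = (A_1, A_2, A_3) is irreducible with ϱ(𝒜) = 1, has the rank one property and the finiteness property, but lacks the unbounded agreements property; moreover for every ξ with |λ| ≤ ξ ≤ |λ|^{−1} the norm ‖(x,y)ᵀ‖_ξ = max{|x|, ξ|y|} is a Barabanov norm for 𝒜, so 𝒜 has Barabanov norms that are not proportional to each other. -/

import Mathlib

/-
The generators have operator norm at most one and `A₁`, `A₂` are norm-one idempotents, so every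
product has norm at most one while `A₁ⁿ = A₁`. Hence `ϱ(𝒜) = 1`, the word `1` witnesses the
finiteness property, and the constant sequences `1, 1, …` and `2, 2, …` keep normalised products of
norm one without sharing a single letter, which kills unbounded agreements. Every generator has
`|det| ≤ |λ|²`, so the determinants of products of length `n` are `O(|λ|^{2n})`; by continuity of
`det` every element of `𝒮(𝒜)` is singular, hence of rank one when nonzero. The coordinate
projections `A₁`, `A₂` put a basis vector into any nonzero invariant subspace and `A₃` swaps the two
basis vectors up to the factor `λ`, which gives irreducibility. Finally `A₁`, `A₂` realise the two
terms of `max {|x|, ξ|y|}`, while `A₃` never exceeds it exactly when `|λ| ≤ ξ ≤ |λ|⁻¹`.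
-/

open Filter Topology

noncomputable section

namespace JSRPaper

variable {𝕂 : Type*} [RCLike 𝕂] {ι : Type*} [Fintype ι] [DecidableEq ι] {r : ℕ}

/-- The Euclidean operator norm of a matrix, i.e. the operator norm induced by the
Euclidean norm on `𝕂^ι`. -/
noncomputable def eNorm (A : Matrix ι ι 𝕂) : ℝ :=
  ‖Matrix.toEuclideanCLM (𝕜 := 𝕂) A‖

/-- The product `A_{i n} ⋯ A_{i 1}` associated to the word `i : Fin n → Fin r`. -/
noncomputable def wordProd (A : Fin r → Matrix ι ι 𝕂) {n : ℕ} (i : Fin n → Fin r) :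
    Matrix ι ι 𝕂 :=
  ((List.ofFn fun k => A (i k)).reverse).prod

/-- The joint spectral radius of the tuple `A`, expressed via the standard
characterisation `ϱ(𝒜) = inf_n max_{|i| = n} ‖A_{i_n} ⋯ A_{i_1}‖^{1/n}`
(the infimum equals the limit). -/
noncomputable def jsr (A : Fin r → Matrix ι ι 𝕂) : ℝ :=
  ⨅ n : ℕ+, (⨆ i : Fin (n : ℕ) → Fin r, eNorm (wordProd A i)) ^ ((n : ℝ)⁻¹)

/-- The spectral radius of a matrix, via Gelfand's formula
`ρ(A) = inf_k ‖A^k‖^{1/k}` (the infimum equals the limit). -/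
noncomputable def specRad (A : Matrix ι ι 𝕂) : ℝ :=
  ⨅ k : ℕ+, eNorm (A ^ (k : ℕ)) ^ (((k : ℕ) : ℝ)⁻¹)

/-- `N` is a norm on `𝕂^ι`. -/
def IsNorm (N : EuclideanSpace 𝕂 ι → ℝ) : Prop :=
  (∀ v, N v = 0 ↔ v = 0) ∧ (∀ (c : 𝕂) (v), N (c • v) = ‖c‖ * N v) ∧
    ∀ u v, N (u + v) ≤ N u + N v

/-- The operator norm of the matrix `A` induced by the norm `N` on `𝕂^ι`. -/
noncomputable def opNormWrt (N : EuclideanSpace 𝕂 ι → ℝ) (A : Matrix ι ι 𝕂) : ℝ :=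
  sSup {x : ℝ | ∃ v, N v ≤ 1 ∧ x = N (Matrix.toEuclideanCLM (𝕜 := 𝕂) A v)}

/-- `N` is a Barabanov norm for the tuple `A` : it is a norm and
`ϱ(𝒜) ‖v‖ = max_i ‖A_i v‖` for every `v`. -/
def IsBarabanov (A : Fin r → Matrix ι ι 𝕂) (N : EuclideanSpace 𝕂 ι → ℝ) : Prop :=
  IsNorm N ∧ ∀ v, jsr A * N v = ⨆ i : Fin r, N (Matrix.toEuclideanCLM (𝕜 := 𝕂) (A i) v)

/-- The tuple `A` is irreducible: no subspace of `𝕂^ι` other than `⊥` and `⊤`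
is invariant under every `A i`. -/
def IsIrreducible (A : Fin r → Matrix ι ι 𝕂) : Prop :=
  ∀ V : Submodule 𝕂 (EuclideanSpace 𝕂 ι),
    (∀ i, ∀ v ∈ V, Matrix.toEuclideanCLM (𝕜 := 𝕂) (A i) v ∈ V) → V = ⊥ ∨ V = ⊤

/-- Two words of length `n` are rotation equivalent if one is a cyclic shift of the other. -/
def RotEquiv {n : ℕ} (z w : Fin n → Fin r) : Prop :=
  ∃ k : ℕ, ∀ j : Fin n, z j = w ⟨(j.val + k) % n, Nat.mod_lt _ j.pos⟩

/-- The tuple `A` satisfies the strong finiteness hypothesis with characteristic word `ω`: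
for every Barabanov norm `N` for `A`, every word of the same length as `ω` which is not
rotation equivalent to `ω` has `N`-operator-norm product strictly less than `ϱ(𝒜)^n`. -/
def StrongFinHyp (A : Fin r → Matrix ι ι 𝕂) {n : ℕ} (ω : Fin n → Fin r) : Prop :=
  ∀ N : EuclideanSpace 𝕂 ι → ℝ, IsBarabanov A N →
    ∀ z : Fin n → Fin r, ¬ RotEquiv z ω → opNormWrt N (wordProd A z) < jsr A ^ n

/-- The tuple `A` is relatively product bounded : `ϱ(𝒜) > 0` and the set of normalised
products `ϱ(𝒜)^{-n} A_{i_n} ⋯ A_{i_1}` is bounded. -/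
def RelProdBounded (A : Fin r → Matrix ι ι 𝕂) : Prop :=
  0 < jsr A ∧ ∃ C : ℝ, ∀ (n : ℕ) (i : Fin n → Fin r), eNorm (wordProd A i) ≤ C * jsr A ^ n

/-- The limit semigroup `𝒮(𝒜) = ⋂_{m ≥ 1} closure (⋃_{n ≥ m} ϱ(𝒜)^{-n} 𝒜_n)`,
written out via the metric characterisation of the closure. -/
def limitSemigroup (A : Fin r → Matrix ι ι 𝕂) : Set (Matrix ι ι 𝕂) :=
  {B | ∀ m : ℕ, ∀ ε > (0 : ℝ), ∃ n : ℕ, m ≤ n ∧ ∃ i : Fin n → Fin r,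
    eNorm ((jsr A ^ n)⁻¹ • wordProd A i - B) < ε}

/-- The tuple `A` has the rank one property: it is relatively product bounded and every
nonzero element of the limit semigroup has rank one. -/
def RankOneProp (A : Fin r → Matrix ι ι 𝕂) : Prop :=
  RelProdBounded A ∧ ∀ B ∈ limitSemigroup A, B ≠ 0 → B.rank = 1

/-- The product `A_{i n} ⋯ A_{i 1}` along the first `n` terms of the sequence `i`
(indexed from `1`). -/
noncomputable def seqProd (A : Fin r → Matrix ι ι 𝕂) (i : ℕ → Fin r) (n : ℕ) :
    Matrix ι ι 𝕂 :=
  wordProd A fun k : Fin n => i (k.val + 1)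

/-- The unbounded agreements property: any two sequences whose normalised partial
products do not tend to zero (i.e. `limsup ‖A_{i(n)} ⋯ A_{i(1)}‖ / ϱ(𝒜)^n > 0`) contain
arbitrarily long identical blocks. -/
def UnboundedAgreements (A : Fin r → Matrix ι ι 𝕂) : Prop :=
  ∀ N : ℕ, ∀ i₁ i₂ : ℕ → Fin r,
    (∃ c > (0 : ℝ), ∀ m : ℕ, ∃ n, m ≤ n ∧ c ≤ eNorm (seqProd A i₁ n) / jsr A ^ n) →
    (∃ c > (0 : ℝ), ∀ m : ℕ, ∃ n, m ≤ n ∧ c ≤ eNorm (seqProd A i₂ n) / jsr A ^ n) →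
    ∃ n₁ n₂ : ℕ, ∀ k : ℕ, 1 ≤ k → k ≤ N → i₁ (n₁ + k) = i₂ (n₂ + k)

/-- The finiteness property: some periodic product realises the joint spectral radius,
`ρ(A_{i_n} ⋯ A_{i_1})^{1/n} = ϱ(𝒜)`. -/
def FinitenessProp (A : Fin r → Matrix ι ι 𝕂) : Prop :=
  ∃ (n : ℕ) (_ : 0 < n) (i : Fin n → Fin r),
    specRad (wordProd A i) ^ ((n : ℝ)⁻¹) = jsr A

/-- The second exterior power (second compound matrix) of a `d × d` matrix, written
in the standard basis `(e_i ∧ e_j)_{i < j}` of `⋀² 𝕂^d`. -/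
noncomputable def ext2 {d : ℕ} (A : Matrix (Fin d) (Fin d) 𝕂) :
    Matrix {p : Fin d × Fin d // p.1 < p.2} {p : Fin d × Fin d // p.1 < p.2} 𝕂 :=
  fun p q => A p.1.1 q.1.1 * A p.1.2 q.1.2 - A p.1.1 q.1.2 * A p.1.2 q.1.1

/-- The word `ω` of length `n` is a power of a shorter word. -/
def IsPowerOfShorter {n : ℕ} (ω : Fin n → Fin r) : Prop :=
  ∃ (q : ℕ) (h0 : 0 < q) (h1 : q < n), q ∣ n ∧
    ∀ j : Fin n, ω j = ω ⟨j.val % q, lt_trans (Nat.mod_lt _ h0) h1⟩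

/-- `Θ_ω(𝒜)`: the supremum of `‖A_{ω_n} ⋯ A_{ω_1}‖^{1/n}` over all Barabanov norms. -/
noncomputable def Theta {n : ℕ} (ω : Fin n → Fin r) (A : Fin r → Matrix ι ι 𝕂) : ℝ :=
  sSup {x : ℝ | ∃ N, IsBarabanov A N ∧ x = opNormWrt N (wordProd A ω) ^ ((n : ℝ)⁻¹)}

end JSRPaper

namespace Matrix

lemma rank_lt_card_of_det_eq_zero {K m : Type*} [Field K] [Fintype m] [DecidableEq m]
    {M : Matrix m m K} (h : M.det = 0) : M.rank < Fintype.card m := by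
  refine M.rank_le_card_width.lt_of_ne fun hfull => ?_
  have hsurj : Function.Surjective M.mulVec := LinearMap.range_eq_top.mp <|
    Submodule.eq_top_of_finrank_eq (hfull.trans (Module.finrank_fintype_fun_eq_card K).symm)
  have := (isUnit_iff_isUnit_det M).mp (mulVec_surjective_iff_isUnit.mp hsurj)
  exact this.ne_zero h

lemma rank_pos_of_ne_zero {K m n : Type*} [Field K] [Fintype n] {M : Matrix m n K}
    (h : M ≠ 0) : 0 < M.rank := by
  refine Nat.pos_of_ne_zero fun hzero => h ?_
  have hrange : LinearMap.range M.mulVecLin = ⊥ :=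
    Submodule.finrank_eq_zero.mp (by simpa [rank] using hzero)
  classical
  exact toLin'.injective (by rw [toLin'_apply', LinearMap.range_eq_bot.mp hrange, map_zero])

end Matrix

namespace JSRPaper

open scoped Matrix.Norms.L2Operator

variable {𝕂 : Type*} [RCLike 𝕂] {r : ℕ}

section Words

variable {ι : Type*} [Fintype ι] [DecidableEq ι] (A : Fin r → Matrix ι ι 𝕂)

lemma wordProd_const (j : Fin r) (n : ℕ) : wordProd A (fun _ : Fin n => j) = A j ^ n := by
  rw [wordProd, List.ofFn_const, List.reverse_replicate, List.prod_replicate]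

lemma det_wordProd {n : ℕ} (i : Fin n → Fin r) :
    (wordProd A i).det = ∏ k, (A (i k)).det := by
  rw [wordProd, ← Matrix.coe_detMonoidHom, map_list_prod, List.map_reverse, List.prod_reverse,
    List.map_ofFn, List.prod_ofFn]
  rfl

lemma norm_det_wordProd_le {c : ℝ} (hdet : ∀ j, ‖(A j).det‖ ≤ c) {n : ℕ} (i : Fin n → Fin r) :
    ‖(wordProd A i).det‖ ≤ c ^ n := by
  rw [det_wordProd, norm_prod]
  simpa using Finset.prod_le_prod (s := Finset.univ) (fun _ _ => norm_nonneg _)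
    (fun k _ => hdet (i k))

lemma norm_list_prod_le_one {l : List (Matrix ι ι 𝕂)} (hl : ∀ M ∈ l, ‖M‖ ≤ 1) :
    ‖l.prod‖ ≤ 1 := by
  induction l with
  | nil =>
    rw [List.prod_nil, Matrix.cstar_norm_def, map_one]
    exact ContinuousLinearMap.norm_id_le
  | cons M l ih =>
    rw [List.prod_cons]
    exact (norm_mul_le _ _).trans (mul_le_one₀ (hl M (by simp)) (norm_nonneg _)
      (ih fun N hN => hl N (by simp [hN])))

lemma eNorm_wordProd_le_one (hA : ∀ j, eNorm (A j) ≤ 1) {n : ℕ} (i : Fin n → Fin r) :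
    eNorm (wordProd A i) ≤ 1 :=
  norm_list_prod_le_one fun M hM => by
    obtain ⟨k, rfl⟩ := List.mem_ofFn.mp (List.mem_reverse.mp hM)
    exact hA (i k)

lemma relProdBounded_of_eNorm_le_one (hjsr : jsr A = 1) (hA : ∀ j, eNorm (A j) ≤ 1) :
    RelProdBounded A :=
  ⟨hjsr ▸ one_pos, 1, fun n i => by
    rw [hjsr, one_pow, mul_one]
    exact eNorm_wordProd_le_one A hA i⟩

lemma det_eq_zero_of_mem_limitSemigroup (hjsr : jsr A = 1) {c : ℝ} (hc₀ : 0 ≤ c) (hc : c < 1)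
    (hdet : ∀ j, ‖(A j).det‖ ≤ c) {B : Matrix ι ι 𝕂} (hB : B ∈ limitSemigroup A) :
    B.det = 0 := by
  refine norm_le_zero_iff.mp (le_of_forall_pos_lt_add fun δ hδ => ?_)
  obtain ⟨ε, hε, hdet_near⟩ := Metric.continuousAt_iff.mp
    (continuous_id.matrix_det.continuousAt (x := B)) (δ / 2) (half_pos hδ)
  obtain ⟨m, hm⟩ := exists_pow_lt_of_lt_one (half_pos hδ) hc
  obtain ⟨n, hmn, i, hi⟩ := hB m ε hε
  rw [hjsr, one_pow, inv_one, one_smul] at hi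
  have hnear : ‖(wordProd A i).det - B.det‖ < δ / 2 := by
    simpa only [dist_eq_norm, id_eq] using
      hdet_near (x := wordProd A i) (by rwa [dist_eq_norm])
  have hsmall : ‖(wordProd A i).det‖ < δ / 2 :=
    calc ‖(wordProd A i).det‖ ≤ c ^ n := norm_det_wordProd_le A hdet i
      _ ≤ c ^ m := pow_le_pow_of_le_one hc₀ hc.le hmn
      _ < δ / 2 := hm
  linarith [norm_le_insert' B.det (wordProd A i).det, norm_sub_rev B.det (wordProd A i).det]

lemma jsr_eq_one_of_isIdempotentElem {j : Fin r} (hj : IsIdempotentElem (A j))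
    (hj₁ : eNorm (A j) = 1) (hA : ∀ k, eNorm (A k) ≤ 1) : jsr A = 1 := by
  have : Nonempty (Fin r) := ⟨j⟩
  have hwords : ∀ n : ℕ+, ⨆ i : Fin n → Fin r, eNorm (wordProd A i) = 1 := fun n =>
    le_antisymm (ciSup_le (eNorm_wordProd_le_one A hA)) <|
      le_ciSup_of_le (Set.finite_range _).bddAbove (fun _ => j) <| by
        rw [wordProd_const, hj.pow_eq n.ne_zero, hj₁]
  simp only [jsr, hwords, Real.one_rpow, ciInf_const]

lemma finitenessProp_of_isIdempotentElem {j : Fin r} (hj : IsIdempotentElem (A j))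
    (hj₁ : eNorm (A j) = 1) (hjsr : jsr A = 1) : FinitenessProp A := by
  have hspec : specRad (A j) = 1 := by
    simp only [specRad, hj.pow_eq (PNat.ne_zero _), hj₁, Real.one_rpow, ciInf_const]
  refine ⟨1, one_pos, fun _ => j, ?_⟩
  rw [wordProd_const, pow_one, hspec, hjsr, Real.one_rpow]

lemma not_unboundedAgreements_of_isIdempotentElem (hjsr : jsr A = 1) {j k : Fin r} (hjk : j ≠ k)
    (hj : IsIdempotentElem (A j)) (hj₁ : eNorm (A j) = 1) (hk : IsIdempotentElem (A k))
    (hk₁ : eNorm (A k) = 1) : ¬ UnboundedAgreements A := by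
  have hconst : ∀ l, IsIdempotentElem (A l) → eNorm (A l) = 1 → ∃ c > (0 : ℝ), ∀ m : ℕ,
      ∃ n, m ≤ n ∧ c ≤ eNorm (seqProd A (fun _ => l) n) / jsr A ^ n := fun l hl hl₁ =>
    ⟨1, one_pos, fun m => ⟨m + 1, m.le_succ, by
      rw [seqProd, wordProd_const, hl.pow_succ_eq, hl₁, hjsr, one_pow, div_one]⟩⟩
  intro hUA
  obtain ⟨n₁, n₂, hagree⟩ := hUA 1 _ _ (hconst j hj hj₁) (hconst k hk hk₁)
  exact hjk (hagree 1 le_rfl le_rfl)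

end Words

lemma rankOneProp_of_det_lt_one (A : Fin r → Matrix (Fin 2) (Fin 2) 𝕂) (hjsr : jsr A = 1)
    (hA : ∀ j, eNorm (A j) ≤ 1) {c : ℝ} (hc₀ : 0 ≤ c) (hc : c < 1)
    (hdet : ∀ j, ‖(A j).det‖ ≤ c) : RankOneProp A := by
  refine ⟨relProdBounded_of_eNorm_le_one A hjsr hA, fun B hB hB₀ => ?_⟩
  have hlt := Matrix.rank_lt_card_of_det_eq_zero
    (det_eq_zero_of_mem_limitSemigroup A hjsr hc₀ hc hdet hB)
  have hpos := Matrix.rank_pos_of_ne_zero hB₀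
  rw [Fintype.card_fin] at hlt
  omega

variable (lam : 𝕂)

-- `exampleTuple lam j` is the paper's `A_{j+1}`.
def exampleTuple : Fin 3 → Matrix (Fin 2) (Fin 2) 𝕂 :=
  ![!![1, 0; 0, 0], !![0, 0; 0, 1], !![0, lam; lam, 0]]

lemma isIdempotentElem_exampleTuple_zero : IsIdempotentElem (exampleTuple lam 0) := by
  ext i j
  fin_cases i <;> fin_cases j <;> simp [exampleTuple, Matrix.mul_apply, Fin.sum_univ_two]

lemma isIdempotentElem_exampleTuple_one : IsIdempotentElem (exampleTuple lam 1) := by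
  ext i j
  fin_cases i <;> fin_cases j <;> simp [exampleTuple, Matrix.mul_apply, Fin.sum_univ_two]

lemma eNorm_exampleTuple_zero : eNorm (exampleTuple lam 0) = 1 := by
  have : exampleTuple lam 0 = Matrix.diagonal (Pi.single 0 1) := by
    ext i j; fin_cases i <;> fin_cases j <;> simp [exampleTuple]
  rw [this, eNorm, Matrix.l2_opNorm_toEuclideanCLM, Matrix.l2_opNorm_diagonal, Pi.norm_single,
    norm_one]

lemma eNorm_exampleTuple_one : eNorm (exampleTuple lam 1) = 1 := by
  have : exampleTuple lam 1 = Matrix.diagonal (Pi.single 1 1) := by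
    ext i j; fin_cases i <;> fin_cases j <;> simp [exampleTuple]
  rw [this, eNorm, Matrix.l2_opNorm_toEuclideanCLM, Matrix.l2_opNorm_diagonal, Pi.norm_single,
    norm_one]

lemma eNorm_exampleTuple_two_le : eNorm (exampleTuple lam 2) ≤ ‖lam‖ := by
  have hswap : !![(0 : 𝕂), 1; 1, 0] ∈ unitary (Matrix (Fin 2) (Fin 2) 𝕂) := by
    refine Unitary.mem_iff.mpr ⟨?_, ?_⟩ <;> ext i j <;> fin_cases i <;> fin_cases j <;>
      simp [Matrix.star_eq_conjTranspose, Matrix.mul_apply, Fin.sum_univ_two]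
  have : exampleTuple lam 2 = lam • !![(0 : 𝕂), 1; 1, 0] := by
    ext i j; fin_cases i <;> fin_cases j <;> simp [exampleTuple]
  calc eNorm (exampleTuple lam 2) ≤ ‖lam‖ * ‖!![(0 : 𝕂), 1; 1, 0]‖ := by
        rw [this]; exact norm_smul_le (β := Matrix (Fin 2) (Fin 2) 𝕂) _ _
    _ = ‖lam‖ := by rw [CStarRing.norm_of_mem_unitary hswap, mul_one]

lemma norm_det_exampleTuple_le (j : Fin 3) : ‖(exampleTuple lam j).det‖ ≤ ‖lam‖ ^ 2 := by
  fin_cases j <;> simp [exampleTuple, Matrix.det_fin_two, sq] <;> positivity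

variable {lam} in
lemma eNorm_exampleTuple_le_one (h₁ : ‖lam‖ ≤ 1) (j : Fin 3) :
    eNorm (exampleTuple lam j) ≤ 1 := by
  fin_cases j
  · exact (eNorm_exampleTuple_zero lam).le
  · exact (eNorm_exampleTuple_one lam).le
  · exact (eNorm_exampleTuple_two_le lam).trans h₁

variable {lam} in
lemma jsr_exampleTuple (h₁ : ‖lam‖ ≤ 1) : jsr (exampleTuple lam) = 1 :=
  jsr_eq_one_of_isIdempotentElem _ (isIdempotentElem_exampleTuple_zero lam)
    (eNorm_exampleTuple_zero lam) (eNorm_exampleTuple_le_one h₁)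

local notation "T" => Matrix.toEuclideanCLM (𝕜 := 𝕂) (n := Fin 2)

lemma exampleTuple_zero_apply (v : EuclideanSpace 𝕂 (Fin 2)) :
    T (exampleTuple lam 0) v = !₂[v 0, 0] := by
  ext i; fin_cases i <;> simp [exampleTuple, Matrix.mulVec, dotProduct, Fin.sum_univ_two]

lemma exampleTuple_one_apply (v : EuclideanSpace 𝕂 (Fin 2)) :
    T (exampleTuple lam 1) v = !₂[0, v 1] := by
  ext i; fin_cases i <;> simp [exampleTuple, Matrix.mulVec, dotProduct, Fin.sum_univ_two]

lemma exampleTuple_two_apply (v : EuclideanSpace 𝕂 (Fin 2)) :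
    T (exampleTuple lam 2) v = !₂[lam * v 1, lam * v 0] := by
  ext i; fin_cases i <;> simp [exampleTuple, Matrix.mulVec, dotProduct, Fin.sum_univ_two]

variable {lam} in
lemma isIrreducible_exampleTuple (hlam : lam ≠ 0) : IsIrreducible (exampleTuple lam) := by
  intro V hV
  refine or_iff_not_imp_left.mpr fun hV₀ => ?_
  obtain ⟨v, hvV, hv⟩ := Submodule.exists_mem_ne_zero_of_ne_bot hV₀
  set e₀ : EuclideanSpace 𝕂 (Fin 2) := !₂[1, 0]
  set e₁ : EuclideanSpace 𝕂 (Fin 2) := !₂[0, 1]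
  have hswap : e₀ ∈ V ↔ e₁ ∈ V := by
    have h₀ : T (exampleTuple lam 2) e₀ = lam • e₁ := by
      rw [exampleTuple_two_apply]; ext i; fin_cases i <;> simp [e₀, e₁]
    have h₁ : T (exampleTuple lam 2) e₁ = lam • e₀ := by
      rw [exampleTuple_two_apply]; ext i; fin_cases i <;> simp [e₀, e₁]
    exact ⟨fun h => (V.smul_mem_iff hlam).mp (h₀ ▸ hV 2 e₀ h),
      fun h => (V.smul_mem_iff hlam).mp (h₁ ▸ hV 2 e₁ h)⟩
  have hone : e₀ ∈ V ∨ e₁ ∈ V := by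
    by_cases hv₀ : v 0 = 0
    · have hv₁ : v 1 ≠ 0 := fun hv₁ => hv (by ext i; fin_cases i <;> simp [hv₀, hv₁])
      have h : T (exampleTuple lam 1) v = v 1 • e₁ := by
        rw [exampleTuple_one_apply]; ext i; fin_cases i <;> simp [e₁]
      exact .inr ((V.smul_mem_iff hv₁).mp (h ▸ hV 1 v hvV))
    · have h : T (exampleTuple lam 0) v = v 0 • e₀ := by
        rw [exampleTuple_zero_apply]; ext i; fin_cases i <;> simp [e₀]
      exact .inl ((V.smul_mem_iff hv₀).mp (h ▸ hV 0 v hvV))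
  have hboth : e₀ ∈ V ∧ e₁ ∈ V := by
    rcases hone with h | h
    · exact ⟨h, hswap.mp h⟩
    · exact ⟨hswap.mpr h, h⟩
  refine Submodule.eq_top_iff'.mpr fun w => ?_
  have hw : w = w 0 • e₀ + w 1 • e₁ := by ext i; fin_cases i <;> simp [e₀, e₁]
  rw [hw]
  exact V.add_mem (V.smul_mem _ hboth.1) (V.smul_mem _ hboth.2)

def maxNorm (ξ : ℝ) (v : EuclideanSpace 𝕂 (Fin 2)) : ℝ := max ‖v 0‖ (ξ * ‖v 1‖)

lemma maxNorm_toLp (ξ : ℝ) (a b : 𝕂) : maxNorm ξ !₂[a, b] = max ‖a‖ (ξ * ‖b‖) := rfl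

lemma isNorm_maxNorm {ξ : ℝ} (hξ : 0 < ξ) : IsNorm (maxNorm (𝕂 := 𝕂) ξ) := by
  refine ⟨fun v => ⟨fun hv => ?_, fun hv => by simp [hv, maxNorm]⟩, fun c v => ?_, fun u v => ?_⟩
  · obtain ⟨h₀, h₁⟩ := max_le_iff.mp hv.le
    have h₁' : ‖v 1‖ ≤ 0 := le_of_mul_le_mul_left (by simpa using h₁) hξ
    ext i; fin_cases i
    · simpa using h₀
    · simpa using h₁'
  · simp only [maxNorm, PiLp.smul_apply, smul_eq_mul, norm_mul, mul_left_comm ξ ‖c‖,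
      mul_max_of_nonneg _ _ (norm_nonneg c)]
  · simp only [maxNorm, PiLp.add_apply]
    apply max_le
    · grw [norm_add_le, ← le_max_left ‖u 0‖, ← le_max_left ‖v 0‖]
    · grw [norm_add_le, mul_add, ← le_max_right ‖u 0‖, ← le_max_right ‖v 0‖]

variable {lam} in
lemma isBarabanov_maxNorm (h₀ : 0 < ‖lam‖) (h₁ : ‖lam‖ ≤ 1) {ξ : ℝ} (hξ₁ : ‖lam‖ ≤ ξ)
    (hξ₂ : ξ ≤ ‖lam‖⁻¹) : IsBarabanov (exampleTuple lam) (maxNorm ξ) := by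
  have hξ : 0 < ξ := h₀.trans_le hξ₁
  have hξlam : ξ * ‖lam‖ ≤ 1 := (le_div_iff₀ h₀).mp (by rwa [one_div])
  refine ⟨isNorm_maxNorm hξ, fun v => ?_⟩
  have e₀ : maxNorm ξ (T (exampleTuple lam 0) v) = ‖v 0‖ := by
    simp [exampleTuple_zero_apply, maxNorm_toLp]
  have e₁ : maxNorm ξ (T (exampleTuple lam 1) v) = ξ * ‖v 1‖ := by
    simp only [exampleTuple_one_apply, maxNorm_toLp, norm_zero]
    exact max_eq_right (by positivity)
  have e₂ : maxNorm ξ (T (exampleTuple lam 2) v) ≤ maxNorm ξ v := by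
    rw [exampleTuple_two_apply, maxNorm_toLp, norm_mul, norm_mul]
    refine max_le ?_ ?_
    · grw [hξ₁]; exact le_max_right _ _
    · grw [← mul_assoc, hξlam, one_mul]; exact le_max_left _ _
  have hbdd := (Set.finite_range fun i => maxNorm ξ (T (exampleTuple lam i) v)).bddAbove
  rw [jsr_exampleTuple h₁, one_mul]
  refine le_antisymm (max_le (e₀ ▸ le_ciSup hbdd 0) (e₁ ▸ le_ciSup hbdd 1))
    (ciSup_le fun i => ?_)
  fin_cases i
  · exact e₀.trans_le (le_max_left _ _)
  · exact e₁.trans_le (le_max_right _ _)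
  · exact e₂

lemma eq_of_maxNorm_eq_mul {ξ η c : ℝ} (hξ : 0 ≤ ξ) (hη : 0 ≤ η)
    (h : ∀ v, maxNorm (𝕂 := 𝕂) η v = c * maxNorm ξ v) : ξ = η := by
  have h₀ := h !₂[1, 0]
  have h₁ := h !₂[0, 1]
  simp only [maxNorm_toLp, norm_one, norm_zero, mul_zero, mul_one, max_eq_left zero_le_one,
    max_eq_right hξ, max_eq_right hη] at h₀ h₁
  rw [h₁, ← h₀, one_mul]

end JSRPaper

open JSRPaper in
/-- **Example 4.** For `A₁ = [[1,0],[0,0]]`, `A₂ = [[0,0],[0,1]]`, `A₃ = [[0,λ],[λ,0]]`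
with `0 < |λ| < 1`, the triple `𝒜 = (A₁, A₂, A₃)` is irreducible with `ϱ(𝒜) = 1`, has
the rank one and finiteness properties but lacks the unbounded agreements property, and
for every `|λ| ≤ ξ ≤ |λ|⁻¹` the norm `‖(x,y)‖_ξ = max {|x|, ξ|y|}` is a Barabanov norm,
so `𝒜` has non-proportional Barabanov norms. -/
theorem stmt_16 {𝕂 : Type*} [RCLike 𝕂] (lam : 𝕂) (h0 : 0 < ‖lam‖) (h1 : ‖lam‖ < 1)
    (A : Fin 3 → Matrix (Fin 2) (Fin 2) 𝕂)
    (hA : A = ![!![1, 0; 0, 0], !![0, 0; 0, 1], !![0, lam; lam, 0]]) :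
    IsIrreducible A ∧
    jsr A = 1 ∧
    RankOneProp A ∧
    FinitenessProp A ∧
    ¬ UnboundedAgreements A ∧
    (∀ ξ : ℝ, ‖lam‖ ≤ ξ → ξ ≤ ‖lam‖⁻¹ →
      IsBarabanov A (fun v : EuclideanSpace 𝕂 (Fin 2) => max ‖v 0‖ (ξ * ‖v 1‖))) ∧
    (∃ N₁ N₂ : EuclideanSpace 𝕂 (Fin 2) → ℝ, IsBarabanov A N₁ ∧ IsBarabanov A N₂ ∧
      ¬ ∃ c > (0 : ℝ), ∀ v, N₂ v = c * N₁ v) := by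
  obtain rfl : A = exampleTuple lam := hA
  have hjsr := jsr_exampleTuple h1.le
  have hbarabanov : ∀ ξ : ℝ, ‖lam‖ ≤ ξ → ξ ≤ ‖lam‖⁻¹ →
      IsBarabanov (exampleTuple lam) (maxNorm ξ) := fun _ => isBarabanov_maxNorm h0 h1.le
  have hinv : 1 ≤ ‖lam‖⁻¹ := (one_le_inv₀ h0).mpr h1.le
  refine ⟨isIrreducible_exampleTuple (norm_pos_iff.mp h0), hjsr,
    rankOneProp_of_det_lt_one _ hjsr (eNorm_exampleTuple_le_one h1.le) (sq_nonneg _)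
      (pow_lt_one₀ h0.le h1 two_ne_zero) (norm_det_exampleTuple_le lam),
    finitenessProp_of_isIdempotentElem _ (isIdempotentElem_exampleTuple_zero lam)
      (eNorm_exampleTuple_zero lam) hjsr,
    not_unboundedAgreements_of_isIdempotentElem _ hjsr (by decide : (0 : Fin 3) ≠ 1)
      (isIdempotentElem_exampleTuple_zero lam) (eNorm_exampleTuple_zero lam)
      (isIdempotentElem_exampleTuple_one lam) (eNorm_exampleTuple_one lam),
    hbarabanov, maxNorm ‖lam‖, maxNorm 1, hbarabanov _ le_rfl (h1.le.trans hinv),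
    hbarabanov 1 h1.le hinv,
    fun ⟨_, _, hc⟩ => h1.ne (eq_of_maxNorm_eq_mul (norm_nonneg lam) zero_le_one hc)⟩
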